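/- Fix λ > 0, γ > 0, α > 0 and p a probability distribution on ℝ^d with bounded support, and let W* be the unique positive definite solution of E_{x∼p}[(W x xᵀ W)/(1 + γ‖W x‖)] + λW = I. Then for every θ ∈ ℝ^d: E_{x∼p}[ min{⟨x,θ⟩², α·|⟨x,θ⟩|} ] ≤ ‖(W*)⁻¹ θ‖² + α·√d·γ·‖(W*)⁻¹ θ‖. -/

import Mathlib

open MeasureTheory Matrix
open scoped Classical

/-- Euclidean norm on `Fin d → ℝ`. -/
noncomputable def enorm' {d : ℕ} (v : Fin d → ℝ) : ℝ := Real.sqrt (∑ i, (v i)^2)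

/-- Euclidean inner product on `Fin d → ℝ`. -/
noncomputable def einner' {d : ℕ} (v w : Fin d → ℝ) : ℝ := ∑ i, v i * w i

/-- Operator (spectral) norm of a real matrix. -/
noncomputable def opNorm {d : ℕ} (M : Matrix (Fin d) (Fin d) ℝ) : ℝ :=
  ‖(Matrix.toEuclideanCLM (𝕜 := ℝ) M :
      EuclideanSpace ℝ (Fin d) →L[ℝ] EuclideanSpace ℝ (Fin d))‖

/-- Positive semidefinite square root (junk value `0` on non-PSD matrices). -/
noncomputable def psqrt {d : ℕ} (A : Matrix (Fin d) (Fin d) ℝ) : Matrix (Fin d) (Fin d) ℝ :=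
  if h : A.PosSemidef then (h.1.eigenvectorUnitary : Matrix (Fin d) (Fin d) ℝ) *
    diagonal ((↑) ∘ (√·) ∘ h.1.eigenvalues) * (star h.1.eigenvectorUnitary : Matrix (Fin d) (Fin d) ℝ)
  else 0

/-- Entrywise expectation of a matrix-valued function. -/
noncomputable def mExp {d : ℕ} (p : Measure (Fin d → ℝ))
    (f : (Fin d → ℝ) → Matrix (Fin d) (Fin d) ℝ) : Matrix (Fin d) (Fin d) ℝ :=
  Matrix.of fun i j => ∫ x, f x i j ∂p

/-- The LDP operator `F(U) = E[(U x xᵀ U)/‖U x‖ · 1{x ≠ 0}] + λ U`. -/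
noncomputable def FLDP {d : ℕ} (p : Measure (Fin d → ℝ)) (lam : ℝ)
    (U : Matrix (Fin d) (Fin d) ℝ) : Matrix (Fin d) (Fin d) ℝ :=
  mExp p (fun x => if x = 0 then 0
    else (enorm' (U.mulVec x))⁻¹ • vecMulVec (U.mulVec x) (U.mulVec x)) + lam • U

/-- The DP operator `G(W) = E[(W x xᵀ W)/(1 + γ‖W x‖)] + λ W`. -/
noncomputable def FJDP {d : ℕ} (p : Measure (Fin d → ℝ)) (γ lam : ℝ)
    (W : Matrix (Fin d) (Fin d) ℝ) : Matrix (Fin d) (Fin d) ℝ :=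
  mExp p (fun x => (1 + γ * enorm' (W.mulVec x))⁻¹ • vecMulVec (W.mulVec x) (W.mulVec x))
    + lam • W

/-- `sym(A) = (Aᵀ A)^{1/2}`. -/
noncomputable def symMat {d : ℕ} (A : Matrix (Fin d) (Fin d) ℝ) : Matrix (Fin d) (Fin d) ℝ :=
  psqrt (Aᵀ * A)

/-- Smallest eigenvalue of a Hermitian matrix (junk value `0` otherwise). -/
noncomputable def lmin {d : ℕ} (A : Matrix (Fin d) (Fin d) ℝ) : ℝ :=
  if h : A.IsHermitian then ⨅ i, h.eigenvalues i else 0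

/-- Largest eigenvalue of a Hermitian matrix (junk value `0` otherwise). -/
noncomputable def lmax {d : ℕ} (A : Matrix (Fin d) (Fin d) ℝ) : ℝ :=
  if h : A.IsHermitian then ⨆ i, h.eigenvalues i else 0

/-!
Write `y = W* x`, `u = (W*)⁻¹ θ` and `c(x) = (1 + γ‖y‖)⁻¹`; symmetry of `W*` gives
`⟨x, θ⟩ = ⟨y, u⟩`. Since `c + c γ ‖y‖ = 1`, the minimum is at most the convex combination
`c ⟨y, u⟩² + α γ c ‖y‖ |⟨y, u⟩|`. The fixed-point equation says `E[c y yᵀ] = I - λ W*`, so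
`E[c ⟨y, u⟩²] = ‖u‖² - λ uᵀ W* u ≤ ‖u‖²` and `E[c ‖y‖²] = d - λ tr W* ≤ d`; Cauchy–Schwarz for the
measure `c · p` then bounds the cross term by `√d ‖u‖`.
-/

lemma enorm'_nonneg {d : ℕ} (v : Fin d → ℝ) : 0 ≤ enorm' v := Real.sqrt_nonneg _

lemma enorm'_sq {d : ℕ} (v : Fin d → ℝ) : enorm' v ^ 2 = v ⬝ᵥ v := by
  rw [enorm', Real.sq_sqrt (Finset.sum_nonneg fun _ _ => sq_nonneg _)]
  simp only [dotProduct, sq]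

lemma abs_le_enorm' {d : ℕ} (v : Fin d → ℝ) (i : Fin d) : |v i| ≤ enorm' v := by
  rw [← Real.sqrt_sq_eq_abs]
  exact Real.sqrt_le_sqrt (Finset.single_le_sum (f := fun j => v j ^ 2)
    (fun j _ => sq_nonneg _) (Finset.mem_univ i))

@[fun_prop]
lemma continuous_enorm' {d : ℕ} : Continuous (enorm' (d := d)) :=
  Real.continuous_sqrt.comp (continuous_finsetSum _ fun _ _ => by fun_prop)

lemma einner'_eq_mulVec_dotProduct {d : ℕ} {W : Matrix (Fin d) (Fin d) ℝ} (hW : W.IsHermitian)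
    (x u : Fin d → ℝ) : einner' x (W *ᵥ u) = (W *ᵥ x) ⬝ᵥ u := by
  rw [einner', ← dotProduct, dotProduct_mulVec, ← mulVec_transpose,
    ← conjTranspose_eq_transpose_of_trivial, hW.eq]

lemma integral_mul_le_sqrt_mul_sqrt {Ω : Type*} [MeasurableSpace Ω] {μ : Measure Ω}
    {f g : Ω → ℝ} (hf₀ : 0 ≤ᵐ[μ] f) (hg₀ : 0 ≤ᵐ[μ] g) (hf : MemLp f 2 μ) (hg : MemLp g 2 μ) :
    ∫ a, f a * g a ∂μ ≤ √(∫ a, f a ^ 2 ∂μ) * √(∫ a, g a ^ 2 ∂μ) := by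
  have h := integral_mul_le_Lp_mul_Lq_of_nonneg Real.HolderConjugate.two_two hf₀ hg₀
    (by simpa using hf) (by simpa using hg)
  simp only [Real.rpow_two, one_div] at h
  simpa only [Real.sqrt_eq_rpow, one_div] using h

lemma min_le_of_mul_one_add_eq_one {a b w s : ℝ} (hw : 0 ≤ w) (hs : 0 ≤ s)
    (hws : w * (1 + s) = 1) : min a b ≤ w * a + w * s * b := by
  have hmin : min a b = w * min a b + w * s * min a b := by linear_combination (-min a b) * hws
  rw [hmin]
  have hws₀ : 0 ≤ w * s := mul_nonneg hw hs
  gcongr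
  exacts [min_le_left a b, min_le_right a b]

section

variable {d : ℕ} {p : Measure (Fin d → ℝ)}

lemma memLp_of_continuous_of_ae_enorm'_le [IsFiniteMeasure p] {R : ℝ}
    (hR : ∀ᵐ x ∂p, enorm' x ≤ R) {E : Type*} [NormedAddCommGroup E] {f : (Fin d → ℝ) → E}
    (hf : Continuous f) (q : ENNReal) : MemLp f q p := by
  obtain ⟨C, hC⟩ :=
    (isCompact_closedBall (0 : Fin d → ℝ) R).exists_bound_of_continuousOn hf.continuousOn
  refine MemLp.of_bound hf.aestronglyMeasurable C (hR.mono fun x hx => hC x ?_)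
  rw [mem_closedBall_zero_iff, pi_norm_le_iff_of_nonneg ((enorm'_nonneg x).trans hx)]
  exact fun i => (abs_le_enorm' x i).trans hx

lemma integrable_of_continuous_of_ae_enorm'_le [IsFiniteMeasure p] {R : ℝ}
    (hR : ∀ᵐ x ∂p, enorm' x ≤ R) {E : Type*} [NormedAddCommGroup E] {f : (Fin d → ℝ) → E}
    (hf : Continuous f) : Integrable f p :=
  memLp_one_iff_integrable.1 (memLp_of_continuous_of_ae_enorm'_le hR hf 1)

lemma dotProduct_mExp_mulVec {f : (Fin d → ℝ) → Matrix (Fin d) (Fin d) ℝ}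
    (hf : ∀ i j, Integrable (fun x => f x i j) p) (u : Fin d → ℝ) :
    u ⬝ᵥ (mExp p f *ᵥ u) = ∫ x, u ⬝ᵥ (f x *ᵥ u) ∂p := by
  simp only [dotProduct, mulVec, mExp, of_apply, Finset.mul_sum]
  rw [integral_finsetSum _ fun i _ => integrable_finsetSum _ fun j _ =>
    ((hf i j).mul_const _).const_mul _]
  refine Finset.sum_congr rfl fun i _ => ?_
  rw [integral_finsetSum _ fun j _ => ((hf i j).mul_const _).const_mul _]
  simp only [integral_const_mul, integral_mul_const]

lemma trace_mExp {f : (Fin d → ℝ) → Matrix (Fin d) (Fin d) ℝ}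
    (hf : ∀ i, Integrable (fun x => f x i i) p) :
    trace (mExp p f) = ∫ x, trace (f x) ∂p := by
  simp only [trace, diag, mExp, of_apply]
  rw [integral_finsetSum _ fun i _ => hf i]

end

noncomputable def dpWeight {d : ℕ} (γ : ℝ) (W : Matrix (Fin d) (Fin d) ℝ) (x : Fin d → ℝ) : ℝ :=
  (1 + γ * enorm' (W *ᵥ x))⁻¹

section FixedPoint

variable {d : ℕ} {p : Measure (Fin d → ℝ)} {R γ lam : ℝ} {W : Matrix (Fin d) (Fin d) ℝ}

lemma dpWeight_mul_one_add (hγ : 0 ≤ γ) (x : Fin d → ℝ) :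
    dpWeight γ W x * (1 + γ * enorm' (W *ᵥ x)) = 1 :=
  inv_mul_cancel₀ (by positivity [enorm'_nonneg (W *ᵥ x)])

lemma dpWeight_nonneg (hγ : 0 ≤ γ) (x : Fin d → ℝ) : 0 ≤ dpWeight γ W x :=
  inv_nonneg.2 (by positivity [enorm'_nonneg (W *ᵥ x)])

@[fun_prop]
lemma continuous_dpWeight (hγ : 0 ≤ γ) : Continuous (dpWeight γ W) :=
  Continuous.inv₀ (by fun_prop) fun x => by positivity [enorm'_nonneg (W *ᵥ x)]

lemma mExp_dpWeight_eq (hfix : FJDP p γ lam W = 1) :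
    mExp p (fun x => dpWeight γ W x • vecMulVec (W *ᵥ x) (W *ᵥ x)) = 1 - lam • W :=
  eq_sub_of_add_eq hfix

variable [IsFiniteMeasure p]

lemma integrable_dpWeight_smul_vecMulVec_apply (hR : ∀ᵐ x ∂p, enorm' x ≤ R) (hγ : 0 ≤ γ)
    (i j : Fin d) :
    Integrable (fun x => (dpWeight γ W x • vecMulVec (W *ᵥ x) (W *ᵥ x)) i j) p :=
  integrable_of_continuous_of_ae_enorm'_le hR
    (by simp only [Matrix.smul_apply, vecMulVec_apply, smul_eq_mul]; fun_prop)

lemma integral_dpWeight_mul_dotProduct_sq_le (hR : ∀ᵐ x ∂p, enorm' x ≤ R) (hγ : 0 ≤ γ)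
    (hlam : 0 ≤ lam) (hW : W.PosSemidef) (hfix : FJDP p γ lam W = 1) (u : Fin d → ℝ) :
    ∫ x, dpWeight γ W x * ((W *ᵥ x) ⬝ᵥ u) ^ 2 ∂p ≤ enorm' u ^ 2 := by
  have h := dotProduct_mExp_mulVec (integrable_dpWeight_smul_vecMulVec_apply (W := W) hR hγ) u
  rw [mExp_dpWeight_eq hfix] at h
  have hWu : 0 ≤ u ⬝ᵥ (W *ᵥ u) := by simpa using hW.dotProduct_mulVec_nonneg u
  calc ∫ x, dpWeight γ W x * ((W *ᵥ x) ⬝ᵥ u) ^ 2 ∂p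
      = ∫ x, u ⬝ᵥ ((dpWeight γ W x • vecMulVec (W *ᵥ x) (W *ᵥ x)) *ᵥ u) ∂p := by
        congr with x
        rw [smul_mulVec, vecMulVec_mulVec, op_smul_eq_smul, dotProduct_smul, dotProduct_smul,
          dotProduct_comm u, smul_eq_mul, smul_eq_mul, sq]
    _ = u ⬝ᵥ u - lam * (u ⬝ᵥ (W *ᵥ u)) := by
        rw [← h, sub_mulVec, one_mulVec, smul_mulVec, dotProduct_sub, dotProduct_smul,
          smul_eq_mul]
    _ ≤ enorm' u ^ 2 := by rw [enorm'_sq]; nlinarith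

lemma integral_dpWeight_mul_enorm'_sq_le (hR : ∀ᵐ x ∂p, enorm' x ≤ R) (hγ : 0 ≤ γ)
    (hlam : 0 ≤ lam) (hW : W.PosSemidef) (hfix : FJDP p γ lam W = 1) :
    ∫ x, dpWeight γ W x * enorm' (W *ᵥ x) ^ 2 ∂p ≤ d := by
  have h := trace_mExp (fun i => integrable_dpWeight_smul_vecMulVec_apply (W := W) hR hγ i i)
  rw [mExp_dpWeight_eq hfix] at h
  calc ∫ x, dpWeight γ W x * enorm' (W *ᵥ x) ^ 2 ∂p = d - lam * trace W := by
        simp only [trace_smul, trace_vecMulVec, ← enorm'_sq, smul_eq_mul] at h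
        rw [← h, trace_sub, trace_one, trace_smul, Fintype.card_fin, smul_eq_mul]
    _ ≤ d := by nlinarith [hW.trace_nonneg]

lemma integral_dpWeight_mul_enorm'_mul_abs_le (hR : ∀ᵐ x ∂p, enorm' x ≤ R) (hγ : 0 ≤ γ)
    (hlam : 0 ≤ lam) (hW : W.PosSemidef) (hfix : FJDP p γ lam W = 1) (u : Fin d → ℝ) :
    ∫ x, dpWeight γ W x * (enorm' (W *ᵥ x) * |(W *ᵥ x) ⬝ᵥ u|) ∂p ≤ √d * enorm' u := by
  have hsq : ∀ x, √(dpWeight γ W x) ^ 2 = dpWeight γ W x :=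
    fun x => Real.sq_sqrt (dpWeight_nonneg hγ x)
  calc ∫ x, dpWeight γ W x * (enorm' (W *ᵥ x) * |(W *ᵥ x) ⬝ᵥ u|) ∂p
      = ∫ x, (√(dpWeight γ W x) * enorm' (W *ᵥ x))
          * (√(dpWeight γ W x) * |(W *ᵥ x) ⬝ᵥ u|) ∂p := by
        congr with x
        linear_combination (-(enorm' (W *ᵥ x) * |(W *ᵥ x) ⬝ᵥ u|)) * hsq x
    _ ≤ √(∫ x, (√(dpWeight γ W x) * enorm' (W *ᵥ x)) ^ 2 ∂p)
          * √(∫ x, (√(dpWeight γ W x) * |(W *ᵥ x) ⬝ᵥ u|) ^ 2 ∂p) :=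
        integral_mul_le_sqrt_mul_sqrt
          (ae_of_all _ fun x => by positivity [enorm'_nonneg (W *ᵥ x)])
          (ae_of_all _ fun x => by positivity)
          (memLp_of_continuous_of_ae_enorm'_le hR (by fun_prop) 2)
          (memLp_of_continuous_of_ae_enorm'_le hR (by fun_prop) 2)
    _ = √(∫ x, dpWeight γ W x * enorm' (W *ᵥ x) ^ 2 ∂p)
          * √(∫ x, dpWeight γ W x * ((W *ᵥ x) ⬝ᵥ u) ^ 2 ∂p) := by
        simp only [mul_pow, hsq, sq_abs]
    _ ≤ √d * √(enorm' u ^ 2) := by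
        gcongr
        exacts [integral_dpWeight_mul_enorm'_sq_le hR hγ hlam hW hfix,
          integral_dpWeight_mul_dotProduct_sq_le hR hγ hlam hW hfix u]
    _ = √d * enorm' u := by rw [Real.sqrt_sq (enorm'_nonneg u)]

lemma integral_min_sq_mul_abs_le (hR : ∀ᵐ x ∂p, enorm' x ≤ R) (hγ : 0 ≤ γ)
    (hlam : 0 ≤ lam) {α : ℝ} (hα : 0 ≤ α) (hW : W.PosSemidef) (hfix : FJDP p γ lam W = 1)
    (u : Fin d → ℝ) :
    ∫ x, min (((W *ᵥ x) ⬝ᵥ u) ^ 2) (α * |(W *ᵥ x) ⬝ᵥ u|) ∂p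
      ≤ enorm' u ^ 2 + α * √d * γ * enorm' u := by
  calc ∫ x, min (((W *ᵥ x) ⬝ᵥ u) ^ 2) (α * |(W *ᵥ x) ⬝ᵥ u|) ∂p
      ≤ ∫ x, (dpWeight γ W x * ((W *ᵥ x) ⬝ᵥ u) ^ 2
          + α * γ * (dpWeight γ W x * (enorm' (W *ᵥ x) * |(W *ᵥ x) ⬝ᵥ u|))) ∂p := by
        refine integral_mono (integrable_of_continuous_of_ae_enorm'_le hR (by fun_prop))
          (integrable_of_continuous_of_ae_enorm'_le hR (by fun_prop)) fun x => ?_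
        refine (min_le_of_mul_one_add_eq_one (dpWeight_nonneg hγ x)
          (by positivity [enorm'_nonneg (W *ᵥ x)]) (dpWeight_mul_one_add hγ x)).trans_eq ?_
        ring
    _ = ∫ x, dpWeight γ W x * ((W *ᵥ x) ⬝ᵥ u) ^ 2 ∂p
          + α * γ * ∫ x, dpWeight γ W x * (enorm' (W *ᵥ x) * |(W *ᵥ x) ⬝ᵥ u|) ∂p := by
        rw [integral_add (integrable_of_continuous_of_ae_enorm'_le hR (by fun_prop))
          (integrable_of_continuous_of_ae_enorm'_le hR (by fun_prop)), integral_const_mul]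
    _ ≤ enorm' u ^ 2 + α * γ * (√d * enorm' u) := by
        gcongr
        exacts [integral_dpWeight_mul_dotProduct_sq_le hR hγ hlam hW hfix u,
          integral_dpWeight_mul_enorm'_mul_abs_le hR hγ hlam hW hfix u]
    _ = enorm' u ^ 2 + α * √d * γ * enorm' u := by ring

end FixedPoint

theorem stmt9_general {d : ℕ} (p : Measure (Fin d → ℝ)) [IsProbabilityMeasure p]
    (hbdd : ∃ R : ℝ, ∀ᵐ x ∂p, enorm' x ≤ R)
    (lam γ α : ℝ) (hlam : 0 < lam) (hγ : 0 < γ) (hα : 0 < α)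
    (Wstar : Matrix (Fin d) (Fin d) ℝ) (hWpd : Wstar.PosDef)
    (hfix : FJDP p γ lam Wstar = 1)
    (θ : Fin d → ℝ) :
    (∫ x, min ((einner' x θ)^2) (α * |einner' x θ|) ∂p)
      ≤ enorm' (Wstar⁻¹.mulVec θ)^2
        + α * Real.sqrt d * γ * enorm' (Wstar⁻¹.mulVec θ) := by
  obtain ⟨R, hR⟩ := hbdd
  have hθ : Wstar *ᵥ (Wstar⁻¹ *ᵥ θ) = θ := by
    rw [mulVec_mulVec, mul_nonsing_inv _ (isUnit_iff_ne_zero.2 hWpd.det_pos.ne'), one_mulVec]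
  have hinner : ∀ x, einner' x θ = (Wstar *ᵥ x) ⬝ᵥ (Wstar⁻¹ *ᵥ θ) := fun x => by
    rw [← einner'_eq_mulVec_dotProduct hWpd.isHermitian, hθ]
  simp only [hinner]
  exact integral_min_sq_mul_abs_le hR hγ.le hlam.le hα.le hWpd.posSemidef hfix _

/-- For the solution `W*` of `FJDP(W) = I`,
`E[min{⟨x,θ⟩², α|⟨x,θ⟩|}] ≤ ‖(W*)⁻¹θ‖² + α√d·γ·‖(W*)⁻¹θ‖`. -/
theorem stmt9 {d : ℕ} (p : Measure (Fin d → ℝ)) [IsProbabilityMeasure p]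
    (hbdd : ∃ R : ℝ, ∀ᵐ x ∂p, enorm' x ≤ R)
    (lam γ α : ℝ) (hlam : 0 < lam) (hγ : 0 < γ) (hα : 0 < α)
    (Wstar : Matrix (Fin d) (Fin d) ℝ) (hWpd : Wstar.PosDef)
    (hfix : FJDP p γ lam Wstar = 1)
    (huniq : ∀ W : Matrix (Fin d) (Fin d) ℝ, W.PosDef → FJDP p γ lam W = 1 → W = Wstar)
    (θ : Fin d → ℝ) :
    (∫ x, min ((einner' x θ)^2) (α * |einner' x θ|) ∂p)
      ≤ enorm' (Wstar⁻¹.mulVec θ)^2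
        + α * Real.sqrt d * γ * enorm' (Wstar⁻¹.mulVec θ) :=
  stmt9_general p hbdd lam γ α hlam hγ hα Wstar hWpd hfix θ
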